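/- Let (B,+,0,−) be a uniquely 2-divisible K-loop with symétron operation s(x,y) = y + (−x + y). If X ⊆ B is convex, then for every c ∈ B the image s(X,c) = {s(u,c) : u ∈ X} is convex; moreover, if x ∈ X then 0 ∈ s(X, x/2). Thus every nonempty convex subset of B is carried by a symmetry onto a convex subset containing 0. -/

import Mathlib

/-!
The reflection `σ_c = s(·, c)` is an automorphism of the symétron: by the automorphic inverse
property and the left Bol identity, `s(s(u,c), s(v,c)) = s(s(u,v), c)`, so `σ_c` maps convex sets
to convex sets. Moreover `σ_h` sends `h + h` to `0`, and unique 2-divisibility provides such an `h`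
for every point of `X`.
-/

section KLoop

variable {B : Type*} {add : B → B → B} {zero : B} {neg : B → B}

def symmetron (add : B → B → B) (neg : B → B) (x y : B) : B := add y (add (neg x) y)

def ConvexFor (s : B → B → B) (X : Set B) : Prop := ∀ x ∈ X, ∀ y ∈ X, s x y ∈ X

theorem ConvexFor.image_of_rightSelfDistrib {s : B → B → B} {X : Set B} (hX : ConvexFor s X)
    (hs : ∀ u v c, s (s u c) (s v c) = s (s u v) c) (c : B) :
    ConvexFor s ((fun u => s u c) '' X) := by
  rintro _ ⟨u, hu, rfl⟩ _ ⟨v, hv, rfl⟩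
  exact ⟨s u v, hX u hu v hv, (hs u v c).symm⟩

theorem neg_add_self_of_leftInverse (h0r : ∀ a, add a zero = a)
    (hlinv : ∀ a x, add (neg a) (add a x) = x) (a : B) : add (neg a) a = zero := by
  simpa only [h0r] using hlinv a zero

theorem neg_neg_of_leftInverse (h0r : ∀ a, add a zero = a)
    (hlinv : ∀ a x, add (neg a) (add a x) = x) (a : B) : neg (neg a) = a := by
  simpa only [neg_add_self_of_leftInverse h0r hlinv, h0r] using hlinv (neg a) a

theorem add_neg_add_of_leftInverse (h0r : ∀ a, add a zero = a)
    (hlinv : ∀ a x, add (neg a) (add a x) = x) (a x : B) : add a (add (neg a) x) = x := by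
  simpa only [neg_neg_of_leftInverse h0r hlinv] using hlinv (neg a) x

theorem add_neg_self_of_leftInverse (h0r : ∀ a, add a zero = a)
    (hlinv : ∀ a x, add (neg a) (add a x) = x) (a : B) : add a (neg a) = zero := by
  simpa only [h0r] using add_neg_add_of_leftInverse h0r hlinv a zero

theorem neg_symmetron (h0r : ∀ a, add a zero = a) (hlinv : ∀ a x, add (neg a) (add a x) = x)
    (haut : ∀ a b, neg (add a b) = add (neg a) (neg b)) (u c : B) :
    neg (symmetron add neg u c) = add (neg c) (add u (neg c)) := by
  rw [symmetron, haut, haut, neg_neg_of_leftInverse h0r hlinv]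

theorem symmetron_right_self_distrib (h0r : ∀ a, add a zero = a)
    (hlinv : ∀ a x, add (neg a) (add a x) = x)
    (hbol : ∀ a b c, add a (add b (add a c)) = add (add a (add b a)) c)
    (haut : ∀ a b, neg (add a b) = add (neg a) (neg b)) (u v c : B) :
    symmetron add neg (symmetron add neg u c) (symmetron add neg v c) =
      symmetron add neg (symmetron add neg u v) c := by
  have hcancel := add_neg_add_of_leftInverse h0r hlinv
  -- the Bol identity reads `L_{a + (b + a)} = L_a ∘ L_b ∘ L_a`, so compare left translations
  suffices h : ∀ t, add (symmetron add neg (symmetron add neg u c) (symmetron add neg v c)) t =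
      add (symmetron add neg (symmetron add neg u v) c) t by
    simpa only [h0r] using h zero
  intro t
  rw [symmetron.eq_1 add neg (symmetron add neg u c),
    symmetron.eq_1 add neg (symmetron add neg u v), neg_symmetron h0r hlinv haut, neg_symmetron h0r hlinv haut]
  set Q := symmetron add neg v c
  have hQ : ∀ x, add Q x = add c (add (neg v) (add c x)) := fun x => (hbol c (neg v) x).symm
  calc add (add Q (add (add (neg c) (add u (neg c))) Q)) t
      = add Q (add (add (neg c) (add u (neg c))) (add Q t)) := (hbol Q _ t).symm
    _ = add Q (add (neg c) (add u (add (neg c) (add Q t)))) := by rw [hbol (neg c) u]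
    _ = add Q (add (neg c) (add u (add (neg v) (add c t)))) := by rw [hQ t, hlinv]
    _ = add c (add (neg v) (add u (add (neg v) (add c t)))) := by rw [hQ, hcancel]
    _ = add (add c (add (add (neg v) (add u (neg v))) c)) t := by rw [hbol, hbol]

theorem symmetron_add_self (h0l : ∀ a, add zero a = a) (h0r : ∀ a, add a zero = a)
    (hlinv : ∀ a x, add (neg a) (add a x) = x)
    (hbol : ∀ a b c, add a (add b (add a c)) = add (add a (add b a)) c)
    (haut : ∀ a b, neg (add a b) = add (neg a) (neg b)) (h : B) :
    symmetron add neg (add h h) h = zero := by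
  have halt : add (add (neg h) (neg h)) h = neg h := by
    simpa only [h0l, neg_add_self_of_leftInverse h0r hlinv, h0r] using (hbol (neg h) zero h).symm
  rw [symmetron, haut, halt, add_neg_self_of_leftInverse h0r hlinv]

end KLoop

theorem kloop_convex_image_convex_containing_zero_general {B : Type*}
    (add : B → B → B) (zero : B) (neg : B → B)
    (h0l : ∀ a, add zero a = a)
    (h0r : ∀ a, add a zero = a)
    (hbol : ∀ a b c, add a (add b (add a c)) = add (add a (add b a)) c)
    (haut : ∀ a b, neg (add a b) = add (neg a) (neg b))
    (hlinv : ∀ a x, add (neg a) (add a x) = x)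
    (hdiv : Function.Bijective (fun x : B => add x x))
    (s : B → B → B)
    (hs : ∀ x y, s x y = add y (add (neg x) y))
    (X : Set B)
    (hXconv : ∀ x ∈ X, ∀ y ∈ X, s x y ∈ X) :
    (∀ c : B, ∀ p ∈ (fun u => s u c) '' X, ∀ q ∈ (fun u => s u c) '' X,
      s p q ∈ (fun u => s u c) '' X) ∧
    (∀ x ∈ X, ∀ h : B, add h h = x → zero ∈ (fun u => s u h) '' X) ∧
    (X.Nonempty → ∃ c : B,
      (∀ p ∈ (fun u => s u c) '' X, ∀ q ∈ (fun u => s u c) '' X,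
        s p q ∈ (fun u => s u c) '' X) ∧ zero ∈ (fun u => s u c) '' X) := by
  obtain rfl : s = symmetron add neg := funext₂ hs
  have hconv (c : B) : ConvexFor (symmetron add neg) ((fun u => symmetron add neg u c) '' X) :=
    ConvexFor.image_of_rightSelfDistrib hXconv (symmetron_right_self_distrib h0r hlinv hbol haut) c
  have hzero (x : B) (hx : x ∈ X) (h : B) (hh : add h h = x) :
      zero ∈ (fun u => symmetron add neg u h) '' X :=
    ⟨x, hx, hh ▸ symmetron_add_self h0l h0r hlinv hbol haut h⟩
  refine ⟨hconv, hzero, ?_⟩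
  rintro ⟨x, hx⟩
  obtain ⟨h, hh⟩ := hdiv.surjective x
  exact ⟨h, hconv h, hzero x hx h hh⟩

/-- In a uniquely 2-divisible K-loop with symétron operation
`s(x,y) = y + (−x + y)`, the symmetric image `s(X,c)` of a convex set `X` is
convex, and if `x ∈ X` then `0 ∈ s(X, x/2)`; thus every nonempty convex subset
is carried by a symmetry onto a convex subset containing `0`. -/
theorem kloop_convex_image_convex_containing_zero {B : Type*}
    (add : B → B → B) (zero : B) (neg : B → B)
    (h0l : ∀ a, add zero a = a)
    (h0r : ∀ a, add a zero = a)
    (huniql : ∀ a b, ∃! x, add x a = b)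
    (huniqr : ∀ a b, ∃! y, add a y = b)
    (hbol : ∀ a b c, add a (add b (add a c)) = add (add a (add b a)) c)
    (haut : ∀ a b, neg (add a b) = add (neg a) (neg b))
    (hnl : ∀ a, add (neg a) a = zero)
    (hnr : ∀ a, add a (neg a) = zero)
    (hlinv : ∀ a x, add (neg a) (add a x) = x)
    (hdiv : Function.Bijective (fun x : B => add x x))
    (s : B → B → B)
    (hs : ∀ x y, s x y = add y (add (neg x) y))
    (X : Set B)
    (hXconv : ∀ x ∈ X, ∀ y ∈ X, s x y ∈ X) :
    (∀ c : B, ∀ p ∈ (fun u => s u c) '' X, ∀ q ∈ (fun u => s u c) '' X,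
      s p q ∈ (fun u => s u c) '' X) ∧
    (∀ x ∈ X, ∀ h : B, add h h = x → zero ∈ (fun u => s u h) '' X) ∧
    (X.Nonempty → ∃ c : B,
      (∀ p ∈ (fun u => s u c) '' X, ∀ q ∈ (fun u => s u c) '' X,
        s p q ∈ (fun u => s u c) '' X) ∧ zero ∈ (fun u => s u c) '' X) :=
  kloop_convex_image_convex_containing_zero_general add zero neg h0l h0r hbol haut hlinv hdiv s hs X
    hXconv
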